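/- Let (E,e,T) be a T-universally complete conditional Riesz triple. Then ba(C_e,R(T)) is an R(T)-module under pointwise addition and scalar multiplication, and the map μ ↦ |μ|(e) is an R(T)-valued norm on ba(C_e,R(T)): it satisfies the triangle inequality, ‖gμ‖ = |g|·‖μ‖ for all g ∈ R(T) and μ ∈ ba(C_e,R(T)), and ‖μ‖ = 0 iff μ = 0. -/

import Mathlib

open scoped Classical

noncomputable section

namespace RieszPaper

universe u v w

/-! ### Basic Riesz space notions -/

section BasicDefs

variable {E : Type u} [Lattice E] [AddCommGroup E]

/-- The positive part `x ⊔ 0`. -/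
def rpos (x : E) : E := x ⊔ 0

/-- The set of components of `e`, i.e. elements `p` with `p ⊓ (e - p) = 0`. -/
def Comp (e : E) : Set E := {p | p ⊓ (e - p) = 0}

/-- Disjoint complement of a set. -/
def disjC (S : Set E) : Set E := {x | ∀ y ∈ S, |x| ⊓ |y| = 0}

/-- The principal band generated by `f` (as double disjoint complement). -/
def pBand (f : E) : Set E := disjC (disjC {f})

/-- `e` is a weak order unit: `e > 0` and the band generated by `e` is all of `E`. -/
def IsWeakUnit (e : E) : Prop := 0 < e ∧ ∀ x : E, 0 ≤ x → x ⊓ e = 0 → x = 0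

/-- The chain `x ⊓ n•|f|`, whose supremum is the band projection of `x ≥ 0`
onto the band generated by `f`. -/
def projChain (f x : E) : Set E := {y | ∃ n : ℕ, y = x ⊓ n • |f|}

/-- Band projection of a positive element onto the band generated by `f`. -/
def projP (f x : E) : E := if h : ∃ s, IsLUB (projChain f x) s then h.choose else 0

/-- Band projection onto the principal band generated by `f`. -/
def proj (f x : E) : E := projP f (rpos x) - projP f (rpos (-x))

/-- The principal projection property. -/
def HasPPP (α : Type u) [Lattice α] [AddCommGroup α] : Prop :=
  ∀ f x : α, 0 ≤ x → ∃ s, IsLUB (projChain f x) s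

/-- A subset is sequentially order closed. -/
def SeqOrderClosed (D : Set E) : Prop :=
  (∀ (x : ℕ → E) (l : E), (∀ n, x n ∈ D) → Monotone x → IsLUB (Set.range x) l → l ∈ D) ∧
  (∀ (x : ℕ → E) (l : E), (∀ n, x n ∈ D) → Antitone x → IsGLB (Set.range x) l → l ∈ D)

end BasicDefs

/-! ### Charges on components -/

section Charges

variable {E : Type u} [Lattice E] [AddCommGroup E]
variable {F : Type v} [Lattice F] [AddCommGroup F]

/-- `μ` is an `F`-valued signed charge on the components of `e`. -/
def IsChargeOn (e : E) (μ : E → F) : Prop :=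
  μ 0 = 0 ∧ ∀ p q : E, p ∈ Comp e → q ∈ Comp e → p ⊓ q = 0 → μ (p + q) = μ p + μ q

/-- `μ` is order bounded on the components of `e`. -/
def OrdBddOn (e : E) (μ : E → F) : Prop :=
  ∃ g : F, 0 ≤ g ∧ ∀ p ∈ Comp e, |μ p| ≤ g

/-- `ba(C_e, F)`: order bounded signed `F`-valued charges on the components of `e`. -/
def baSet (e : E) : Set (E → F) := {μ | IsChargeOn e μ ∧ OrdBddOn e μ}

/-- The order on charges: `μ ≤ ν` iff `ν - μ` is positive on components. -/
def baLe (e : E) (μ ν : E → F) : Prop := ∀ p ∈ Comp e, μ p ≤ ν p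

/-- `η` is the least upper bound of `S ⊆ ba(C_e,F)` within `ba(C_e,F)`. -/
def IsLUBba (e : E) (S : Set (E → F)) (η : E → F) : Prop :=
  η ∈ baSet e ∧ (∀ μ ∈ S, baLe e μ η) ∧
    ∀ ξ ∈ baSet e, (∀ μ ∈ S, baLe e μ ξ) → baLe e η ξ

/-- `η` is the greatest lower bound of `S ⊆ ba(C_e,F)` within `ba(C_e,F)`. -/
def IsGLBba (e : E) (S : Set (E → F)) (η : E → F) : Prop :=
  η ∈ baSet e ∧ (∀ μ ∈ S, baLe e η μ) ∧
    ∀ ξ ∈ baSet e, (∀ μ ∈ S, baLe e ξ μ) → baLe e ξ η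

end Charges

section ChargesCCL

variable {E : Type u} [Lattice E] [AddCommGroup E]
variable {F : Type v} [ConditionallyCompleteLattice F] [AddCommGroup F]

/-- Pointwise formula for the supremum of two charges. -/
def chSupAt (e : E) (μ ν : E → F) (p : E) : F :=
  sSup {v | ∃ q, q ∈ Comp e ∧ q ≤ p ∧ v = μ q + ν (p - q)}

/-- Pointwise formula for the infimum of two charges. -/
def chInfAt (e : E) (μ ν : E → F) (p : E) : F :=
  sInf {v | ∃ q, q ∈ Comp e ∧ q ≤ p ∧ v = μ q + ν (p - q)}

/-- The modulus of a charge, via the Riesz–Kantorovich-type formula. -/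
def chargeAbs (e : E) (μ : E → F) : E → F :=
  fun p => sSup {v | ∃ q, q ∈ Comp e ∧ q ≤ p ∧ v = μ q - μ (p - q)}

/-- The positive part of a charge. -/
def chargePos (e : E) (μ : E → F) : E → F :=
  fun p => sSup {v | ∃ q, q ∈ Comp e ∧ q ≤ p ∧ v = μ q}

/-- The negative part of a charge. -/
def chargeNeg (e : E) (μ : E → F) : E → F :=
  fun p => sSup {v | ∃ q, q ∈ Comp e ∧ q ≤ p ∧ v = -(μ q)}

end ChargesCCL

/-! ### Operators -/

section Ops

variable {E : Type u} [Lattice E] [AddCommGroup E] [Module ℝ E]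

def PosOn (Lp : Set E) (φ : E → E) : Prop := ∀ f ∈ Lp, 0 ≤ f → 0 ≤ φ f

def AddOn (Lp : Set E) (φ : E → E) : Prop :=
  ∀ f g : E, f ∈ Lp → g ∈ Lp → φ (f + g) = φ f + φ g

def SmulOn (Lp : Set E) (φ : E → E) : Prop :=
  ∀ (r : ℝ) (f : E), f ∈ Lp → φ (r • f) = r • φ f

/-- `φ` is a regular operator on `Lp`: a difference of two positive linear maps. -/
def RegularOn (Lp : Set E) (φ : E → E) : Prop :=
  ∃ ψ₁ ψ₂ : E → E, AddOn Lp ψ₁ ∧ AddOn Lp ψ₂ ∧ SmulOn Lp ψ₁ ∧ SmulOn Lp ψ₂ ∧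
    PosOn Lp ψ₁ ∧ PosOn Lp ψ₂ ∧ ∀ f ∈ Lp, φ f = ψ₁ f - ψ₂ f

/-- Uniform convergence of a sequence with regulator `u`. -/
def UnifConv (u : E) (s : ℕ → E) (f : E) : Prop :=
  ∃ ε : ℕ → ℝ, Antitone ε ∧ Filter.Tendsto ε Filter.atTop (nhds 0) ∧
    ∀ n, |f - s n| ≤ ε n • u

end Ops

/-! ### Conditional expectation operators -/

section CondExp

variable {E : Type u} [ConditionallyCompleteLattice E] [AddCommGroup E] [Module ℝ E]

/-- `(E, e, T)` is a conditional Riesz triple: `e` is a weak order unit and `T` is a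
strictly positive conditional expectation operator with `T e = e` whose range is a
Dedekind complete Riesz subspace. -/
structure IsCondTriple (e : E) (T : E →ₗ[ℝ] E) : Prop where
  weakUnit : IsWeakUnit e
  pos : ∀ x : E, 0 ≤ x → 0 ≤ T x
  strictPos : ∀ x : E, 0 < x → 0 < T x
  ordCont : ∀ (A : Set E) (s : E), A.Nonempty → DirectedOn (· ≤ ·) A →
    IsLUB A s → IsLUB (T '' A) (T s)
  idem : ∀ x : E, T (T x) = T x
  unitFix : T e = e
  rangeSupClosed : ∀ x y : E, x ∈ Set.range T → y ∈ Set.range T → x ⊔ y ∈ Set.range T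
  rangeDedekind : ∀ A : Set E, A ⊆ Set.range T → A.Nonempty → BddAbove A →
    sSup A ∈ Set.range T

end CondExp

/-! ### Universal completion and T-universal completeness -/

section Univ

variable {E : Type u} {G : Type v}
variable [ConditionallyCompleteLattice E] [AddCommGroup E] [Module ℝ E]
variable [ConditionallyCompleteLattice G] [AddCommGroup G] [Module ℝ G]

/-- `j : E → G` realizes `G` as a universal completion of `E`. -/
structure IsUnivCompletion (j : E →ₗ[ℝ] G) : Prop where
  bipos : ∀ x : E, 0 ≤ j x ↔ 0 ≤ x
  latHom : ∀ x y : E, j (x ⊔ y) = j x ⊔ j y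
  dense : ∀ z : G, 0 < z → ∃ x : E, 0 < j x ∧ j x ≤ z
  univComplete : ∀ S : Set G, (∀ x ∈ S, 0 ≤ x) →
    S.Pairwise (fun a b => a ⊓ b = 0) → BddAbove S

/-- `E` is `T`-universally complete (relative to the universal completion `j : E → G`):
every nonempty upwards directed subset `A ⊆ E` such that `j[T[A]]` is bounded above in
`G` has a supremum in `E`. -/
def TUnivComplete (T : E →ₗ[ℝ] E) (j : E →ₗ[ℝ] G) : Prop :=
  ∀ A : Set E, A.Nonempty → DirectedOn (· ≤ ·) A →
    BddAbove (⇑j '' (⇑T '' A)) → BddAbove A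

end Univ

/-- `mul` is a commutative `f`-algebra multiplication with unit `u`. -/
structure IsFAlgebraMul {G : Type v} [Lattice G] [AddCommGroup G] [Module ℝ G]
    (u : G) (mul : G → G → G) : Prop where
  comm : ∀ x y, mul x y = mul y x
  assoc : ∀ x y z, mul (mul x y) z = mul x (mul y z)
  add_left : ∀ x y z, mul (x + y) z = mul x z + mul y z
  smul_left : ∀ (r : ℝ) (x y), mul (r • x) y = r • mul x y
  one_mul : ∀ x, mul u x = x
  mul_nonneg : ∀ x y, 0 ≤ x → 0 ≤ y → 0 ≤ mul x y
  disj : ∀ x y z, x ⊓ y = 0 → 0 ≤ z → mul x z ⊓ y = 0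

/-! ### Bundled T-universally complete conditional Riesz triples -/

/-- A `T`-universally complete conditional Riesz triple `(E, e, T)`, together with a
universal completion `j : E → G` carrying its `f`-algebra multiplication (with unit
`j e`).  Since `E = L¹(T)` is an `R(T)`-module, products of elements of `L^∞(T)` with
elements of `E` again lie in `E` (`mulClosed`). -/
structure CRT (E : Type u) (G : Type v)
    [ConditionallyCompleteLattice E] [AddCommGroup E] [Module ℝ E]
    [CovariantClass E E (· + ·) (· ≤ ·)] [PosSMulMono ℝ E]
    [ConditionallyCompleteLattice G] [AddCommGroup G] [Module ℝ G]
    [CovariantClass G G (· + ·) (· ≤ ·)] [PosSMulMono ℝ G] where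
  e : E
  T : E →ₗ[ℝ] E
  j : E →ₗ[ℝ] G
  mul : G → G → G
  triple : IsCondTriple e T
  compl : IsUnivCompletion j
  falg : IsFAlgebraMul (j e) mul
  tuc : TUnivComplete T j
  mulClosed : ∀ f g : E, (∃ h : E, h ∈ Set.range T ∧ 0 ≤ h ∧ |f| ≤ h) →
    mul (j f) (j g) ∈ Set.range ⇑j

namespace CRT

variable {E : Type u} {G : Type v}
variable [ConditionallyCompleteLattice E] [AddCommGroup E] [Module ℝ E]
  [CovariantClass E E (· + ·) (· ≤ ·)] [PosSMulMono ℝ E]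
variable [ConditionallyCompleteLattice G] [AddCommGroup G] [Module ℝ G]
  [CovariantClass G G (· + ·) (· ≤ ·)] [PosSMulMono ℝ G]
variable (C : CRT E G)

/-- The range `R(T)`. -/
def R : Set E := Set.range ⇑C.T

/-- The product `g · f` of two elements of `E = L¹(T)`, computed in the universal
completion (meaningful whenever the product lies again in `E`, e.g. for
`g ∈ R(T)` or `g ∈ L^∞(T)`). -/
def sm (g f : E) : E := @Function.invFun E G ⟨0⟩ (⇑C.j) (C.mul (C.j g) (C.j f))

/-- `L^∞(T) = {f : |f| ≤ g for some g ∈ R(T)₊}`. -/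
def Linf : Set E := {f | ∃ h ∈ C.R, 0 ≤ h ∧ |f| ≤ h}

/-- The `R(T)`-valued norm `‖f‖_{T,1} = T |f|`. -/
def nrm1 (f : E) : E := C.T |f|

/-- The `R(T)`-valued norm `‖f‖_{T,∞} = inf {α ∈ R(T)₊ : |f| ≤ α}`. -/
def nrmInf (f : E) : E := sInf {a | a ∈ C.R ∧ 0 ≤ a ∧ |f| ≤ a}

/-- Order bounded signed `R(T)`-valued charges on the components of `u`. -/
def baR (u : E) : Set (E → E) :=
  {μ | IsChargeOn u μ ∧ (∀ p ∈ Comp u, μ p ∈ C.R) ∧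
     ∃ g ∈ C.R, 0 ≤ g ∧ ∀ p ∈ Comp u, |μ p| ≤ g}

/-- `ba(T)`: the `T`-absolutely continuous charges in `ba(C_e, R(T))`. -/
def baT : Set (E → E) :=
  {μ | μ ∈ C.baR C.e ∧ ∀ p ∈ Comp C.e, μ p ∈ pBand (C.T p)}

/-- `x = ∑ αᵢ pᵢ` is a standard representation of the `e`-step function `x` with
`R(T)`-coefficients. -/
def IsStdRep (x : E) (n : ℕ) (α p : Fin n → E) : Prop :=
  (∀ i, α i ∈ C.R) ∧ (∀ i, p i ∈ Comp C.e) ∧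
  (∀ i j, i ≠ j → p i ⊓ p j = 0) ∧ (∑ i, p i) = C.e ∧
  x = ∑ i, C.sm (α i) (p i)

/-- `S_e(T)`: the `e`-step functions with `R(T)`-coefficients. -/
def Steps : Set E := {x | ∃ (n : ℕ) (α p : Fin n → E), C.IsStdRep x n α p}

/-- The integral `I_μ` of a step function: `I_μ (∑ αᵢ pᵢ) = ∑ αᵢ μ(pᵢ)`. -/
def Imu (μ : E → E) (x : E) : E :=
  @Classical.epsilon E ⟨0⟩ fun v =>
    ∃ (n : ℕ) (α p : Fin n → E), C.IsStdRep x n α p ∧ v = ∑ i, C.sm (α i) (μ (p i))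

/-- The integral of a positive element of `L^∞(T)` with respect to a positive charge. -/
def intPos (μ : E → E) (f : E) : E :=
  sSup {v | ∃ g ∈ C.Steps, 0 ≤ g ∧ g ≤ f ∧ v = C.Imu μ g}

/-- The integral `∫ f dμ = ∫ f⁺ dμ⁺ − ∫ f⁻ dμ⁺ − ∫ f⁺ dμ⁻ + ∫ f⁻ dμ⁻`. -/
def integral (μ : E → E) (f : E) : E :=
  C.intPos (chargePos C.e μ) (rpos f) - C.intPos (chargePos C.e μ) (rpos (-f))
    - C.intPos (chargeNeg C.e μ) (rpos f) + C.intPos (chargeNeg C.e μ) (rpos (-f))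

/-- Membership in `L^r(Lp, R(T))`: regular linear operators with values in `R(T)`. -/
structure MemLr (Lp : Set E) (φ : E → E) : Prop where
  add : AddOn Lp φ
  smul : SmulOn Lp φ
  mem : ∀ f ∈ Lp, φ f ∈ C.R
  regular : RegularOn Lp φ

/-- Membership in the `T`-strong dual of `(Lp, nrm)`: `R(T)`-linear, regular,
`nrm`-bounded maps into `R(T)`. -/
structure MemDual (Lp : Set E) (nrm : E → E) (φ : E → E) : Prop where
  add : AddOn Lp φ
  smul : SmulOn Lp φ
  modHom : ∀ g f : E, g ∈ C.R → f ∈ Lp → φ (C.sm g f) = C.sm g (φ f)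
  mem : ∀ f ∈ Lp, φ f ∈ C.R
  regular : RegularOn Lp φ
  bdd : ∃ k ∈ C.R, 0 ≤ k ∧ ∀ f ∈ Lp, |φ f| ≤ C.sm k (nrm f)

/-- The `R(T)`-valued norm on the `T`-strong dual. -/
def dualNorm (Lp : Set E) (nrm : E → E) (φ : E → E) : E :=
  sInf {g | g ∈ C.R ∧ 0 ≤ g ∧ ∀ f ∈ Lp, |φ f| ≤ C.sm g (nrm f)}

/-- `|φ| ≤ |ψ|` in `L^r(Lp, R(T))`, via the Riesz–Kantorovich formula. -/
def OpAbsLe (Lp : Set E) (φ ψ : E → E) : Prop :=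
  ∀ f ∈ Lp, 0 ≤ f → ∀ g ∈ Lp, |g| ≤ f →
    |φ g| ≤ sSup {v | ∃ h, h ∈ Lp ∧ |h| ≤ f ∧ v = |ψ h|}

/-- The canonical partial inverse of `h` in `R(T)`: the element `g` of the band
generated by `|h|` with `h g = P_{|h|} e`. -/
def pinv (h : E) : E :=
  @Classical.epsilon E ⟨0⟩ fun g =>
    g ∈ C.R ∧ g ∈ pBand (|h|) ∧ C.sm h g = proj (|h|) C.e

end CRT

/-! ### Bundled Dedekind complete Riesz spaces, for existential statements -/

structure BRiesz : Type (u + 1) where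
  carrier : Type u
  [ccl : ConditionallyCompleteLattice carrier]
  [grp : AddCommGroup carrier]
  [mod : Module ℝ carrier]
  [cov : CovariantClass carrier carrier (· + ·) (· ≤ ·)]
  [psm : PosSMulMono ℝ carrier]

attribute [instance] BRiesz.ccl BRiesz.grp BRiesz.mod BRiesz.cov BRiesz.psm

/-- `(F, ẽ, T̃)` together with `i : E → F` is a `T`-universal completion of `(E, e, T)`. -/
structure IsTUnivCompletion
    {E : Type u} [ConditionallyCompleteLattice E] [AddCommGroup E] [Module ℝ E]
    {F : Type v} [ConditionallyCompleteLattice F] [AddCommGroup F] [Module ℝ F]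
    (e : E) (T : E →ₗ[ℝ] E) (e' : F) (T' : F →ₗ[ℝ] F) (i : E →ₗ[ℝ] F) : Prop where
  triple : IsCondTriple e' T'
  tuniv : ∃ (U : BRiesz.{v}) (j : F →ₗ[ℝ] U.carrier),
    IsUnivCompletion j ∧ TUnivComplete T' j
  bipos : ∀ x : E, 0 ≤ i x ↔ 0 ≤ x
  latHom : ∀ x y : E, i (x ⊔ y) = i x ⊔ i y
  dense : ∀ z : F, 0 < z → ∃ x : E, 0 < i x ∧ i x ≤ z
  unit : i e = e'
  comm : ∀ x : E, T' (i x) = i (T x)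


/-! ### Powers via functional calculus, for the spaces `L^p(T)` -/

/-- A `T`-universally complete conditional Riesz triple together with the power
functions `x ↦ x^p` (`x ≥ 0`, `p > 0`) of the functional calculus on the universal
completion. -/
structure CRTP (E : Type u) (G : Type v)
    [ConditionallyCompleteLattice E] [AddCommGroup E] [Module ℝ E]
    [CovariantClass E E (· + ·) (· ≤ ·)] [PosSMulMono ℝ E]
    [ConditionallyCompleteLattice G] [AddCommGroup G] [Module ℝ G]
    [CovariantClass G G (· + ·) (· ≤ ·)] [PosSMulMono ℝ G]
    extends CRT E G where
  epow : G → ℝ → G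
  epow_one : ∀ x : G, 0 ≤ x → epow x 1 = x
  epow_nonneg : ∀ (x : G) (p : ℝ), 0 ≤ x → 0 < p → 0 ≤ epow x p
  epow_mono : ∀ (x y : G) (p : ℝ), 0 ≤ x → x ≤ y → 0 < p → epow x p ≤ epow y p
  epow_unit : ∀ p : ℝ, 0 < p → epow (toCRT.j toCRT.e) p = toCRT.j toCRT.e
  epow_exp_mul : ∀ (x : G) (p q : ℝ), 0 ≤ x → 0 < p → 0 < q →
    epow (epow x p) q = epow x (p * q)
  epow_mul : ∀ (x y : G) (p : ℝ), 0 ≤ x → 0 ≤ y → 0 < p →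
    epow (toCRT.mul x y) p = toCRT.mul (epow x p) (epow y p)
  epow_succ : ∀ (x : G) (n : ℕ), 0 ≤ x → 0 < n →
    epow x ((n : ℝ) + 1) = toCRT.mul (epow x (n : ℝ)) x
  epow_sup : ∀ (x y : G) (p : ℝ), 0 ≤ x → 0 ≤ y → 0 < p →
    epow (x ⊔ y) p = epow x p ⊔ epow y p
  epow_rangeT : ∀ (x : E) (p : ℝ), 0 ≤ x → 0 < p → x ∈ Set.range ⇑toCRT.T →
    epow (toCRT.j x) p ∈ ⇑toCRT.j '' Set.range ⇑toCRT.T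

namespace CRTP

variable {E : Type u} {G : Type v}
variable [ConditionallyCompleteLattice E] [AddCommGroup E] [Module ℝ E]
  [CovariantClass E E (· + ·) (· ≤ ·)] [PosSMulMono ℝ E]
variable [ConditionallyCompleteLattice G] [AddCommGroup G] [Module ℝ G]
  [CovariantClass G G (· + ·) (· ≤ ·)] [PosSMulMono ℝ G]
variable (C : CRTP E G)

/-- the `p`-th power of `x ∈ E`, computed in the universal completion. -/
def powE (x : E) (p : ℝ) : E :=
  @Function.invFun E G ⟨0⟩ (⇑C.toCRT.j) (C.epow (C.toCRT.j x) p)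

/-- `L^p(T) = {f ∈ L¹(T) : |f|^p ∈ L¹(T)}` for `p ∈ [1, ∞)`. -/
def LpSet (p : ℝ) : Set E := {f | C.epow (C.toCRT.j |f|) p ∈ Set.range ⇑C.toCRT.j}

/-- The `R(T)`-valued norm `‖f‖_{T,p} = (T |f|^p)^{1/p}`. -/
def nrmP (p : ℝ) (f : E) : E := C.powE (C.toCRT.T (C.powE |f| p)) (1 / p)

end CRTP

/-!
Once `|μ|(e)` is written as the supremum of `μ q - μ (e - q)` over the components `q` of `e`,
the closure of `ba(C_e, R(T))` under sums and real multiples, the triangle inequality and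
definiteness are formal. The substance is that `R(T)` is closed under the multiplication of the
universal completion. For a component `p ∈ R(T)` of `e` and `0 ≤ x ∈ R(T)`, the product `p x`
is the band projection `sup_n (x ⊓ n p)`, which lies in `R(T)` by Dedekind completeness. A
bounded `0 ≤ g ∈ R(T)` is then approximated uniformly from below by `R(T)`-combinations of such
components, and a general `g` by its truncations `g ⊓ n e`; the errors tend to `0` because
multiplication in the Archimedean f-algebra is order continuous. The same order continuity gives
`|g μ|(e) = |g| |μ|(e)`.
-/

section LatticeOrderedGroup

variable {α : Type*} [Lattice α] [AddCommGroup α] [CovariantClass α α (· + ·) (· ≤ ·)]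

lemma sub_inf_eq_posPart_sub (a b : α) : a - a ⊓ b = (a - b)⁺ := by
  rw [sub_inf, sub_self, posPart_def, sup_comm]

lemma posPart_sub_of_inf_eq_zero {a b : α} (h : a ⊓ b = 0) : (a - b)⁺ = a := by
  rw [← sub_inf_eq_posPart_sub, h, sub_zero]

lemma add_eq_sup_of_inf_eq_zero {a b : α} (h : a ⊓ b = 0) : a + b = a ⊔ b := by
  rw [← inf_add_sup, h, zero_add]

lemma le_of_inf_eq_zero_of_le_add {x b c : α} (hxb : x ⊓ b = 0) (hle : x ≤ b + c)
    (hc : 0 ≤ c) : x ≤ c := by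
  rw [← posPart_sub_of_inf_eq_zero hxb, posPart_def]
  exact sup_le (sub_le_iff_le_add'.2 hle) hc

lemma inf_nsmul_eq_zero {a b : α} (ha : 0 ≤ a) (hb : 0 ≤ b) (h : a ⊓ b = 0) :
    ∀ n : ℕ, a ⊓ n • b = 0
  | 0 => by rw [zero_nsmul, inf_of_le_right ha]
  | n + 1 => by
    set d := a ⊓ (n + 1) • b
    have hdb : d ⊓ b = 0 :=
      le_antisymm ((inf_le_inf_right b inf_le_left).trans_eq h) (le_inf (le_inf ha
        (nsmul_nonneg hb _)) hb)
    have hdn : d ≤ n • b :=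
      le_of_inf_eq_zero_of_le_add hdb (inf_le_right.trans_eq (succ_nsmul' b n))
        (nsmul_nonneg hb n)
    refine le_antisymm ?_ (le_inf ha (nsmul_nonneg hb _))
    rw [← inf_nsmul_eq_zero ha hb h n]
    exact le_inf inf_le_left hdn

lemma abs_sub_eq_add_of_inf_eq_zero {a b : α} (h : |a| ⊓ |b| = 0) : |a - b| = |a| + |b| := by
  refine le_antisymm ?_ ?_
  · simpa only [sub_eq_add_neg, abs_neg] using abs_add_le a (-b)
  · rw [add_eq_sup_of_inf_eq_zero h]
    refine sup_le (le_of_inf_eq_zero_of_le_add h ?_ (abs_nonneg _))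
      (le_of_inf_eq_zero_of_le_add (inf_comm (|a|) _ ▸ h) ?_ (abs_nonneg _))
    · simpa [add_comm] using abs_add_le (a - b) b
    · simpa [abs_sub_comm] using abs_add_le a (b - a)

lemma eq_zero_of_eq_neg {a : α} (h : a = -a) : a = 0 := by
  have hpos : a⁺ = a⁻ := by rw [negPart_def, ← h, posPart_def]
  have hzero : a⁺ = 0 := by
    calc a⁺ = a⁺ ⊓ a⁻ := by rw [← hpos, inf_idem]
      _ = 0 := posPart_inf_negPart_eq_zero a
  rw [← posPart_sub_negPart a, ← hpos, hzero, sub_zero]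

/-- Pointwise: where `w > n y` the infimum is below `y < w / n`, elsewhere it vanishes. -/
lemma nsmul_posPart_sub_nsmul_inf_le {w y : α} (hw : 0 ≤ w) (hy : 0 ≤ y) (n : ℕ) :
    n • ((w - n • y)⁺ ⊓ y) ≤ w := by
  set a := (w - n • y)⁺ ⊓ y
  have ha : 0 ≤ a := le_inf (posPart_nonneg _) hy
  have haN : a ⊓ (w - n • y)⁻ = 0 :=
    le_antisymm ((inf_le_inf_right _ inf_le_left).trans_eq (posPart_inf_negPart_eq_zero _))
      (le_inf ha (negPart_nonneg _))
  refine le_of_inf_eq_zero_of_le_add (b := (w - n • y)⁻) ?_ ?_ hw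
  · rw [inf_comm]; exact inf_nsmul_eq_zero (negPart_nonneg _) ha (by rwa [inf_comm]) n
  · calc n • a ≤ n • y := nsmul_le_nsmul_right inf_le_right n
      _ = w - ((w - n • y)⁺ - (w - n • y)⁻) := by rw [posPart_sub_negPart]; abel
      _ ≤ (w - n • y)⁻ + w := by
        rw [sub_sub_eq_add_sub, add_comm]; exact sub_le_self _ (posPart_nonneg _)

end LatticeOrderedGroup

section DedekindComplete

variable {β : Type*} [ConditionallyCompleteLattice β] [AddCommGroup β]

lemma isLUB_projP (f x : β) : IsLUB (projChain f x) (projP f x) := by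
  have h : ∃ s, IsLUB (projChain f x) s :=
    ⟨_, isLUB_csSup ⟨x ⊓ 0 • |f|, 0, rfl⟩
      ⟨x, by rintro _ ⟨n, rfl⟩; exact inf_le_left⟩⟩
  rw [projP, dif_pos h]
  exact h.choose_spec

lemma projP_le (f x : β) : projP f x ≤ x :=
  (isLUB_projP f x).2 (by rintro _ ⟨n, rfl⟩; exact inf_le_left)

lemma projP_nonneg (f : β) {x : β} (hx : 0 ≤ x) : 0 ≤ projP f x :=
  le_trans (by rw [zero_nsmul, inf_of_le_right hx]) ((isLUB_projP f x).1 ⟨0, rfl⟩)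

variable [CovariantClass β β (· + ·) (· ≤ ·)]

lemma nonpos_of_forall_nsmul_le {a X : β} (h : ∀ n : ℕ, n • a ≤ X) : a ≤ 0 := by
  have hbdd : BddAbove (Set.range fun n : ℕ => n • a) :=
    ⟨X, by rintro _ ⟨n, rfl⟩; exact h n⟩
  set s := sSup (Set.range fun n : ℕ => n • a)
  have hs : s ≤ s - a := csSup_le (Set.range_nonempty _) <| by
    rintro _ ⟨n, rfl⟩
    exact le_sub_iff_add_le.2 (succ_nsmul a n ▸ le_csSup hbdd ⟨n + 1, rfl⟩)
  exact (le_sub_self_iff s).1 hs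

lemma inf_eq_zero_of_forall_le_posPart_sub_nsmul {w y z : β} (hw : 0 ≤ w) (hy : 0 ≤ y)
    (hz : 0 ≤ z) (h : ∀ n : ℕ, z ≤ (w - n • y)⁺) : z ⊓ y = 0 :=
  le_antisymm (nonpos_of_forall_nsmul_le fun n =>
      (nsmul_le_nsmul_right (inf_le_inf_right y (h n)) n).trans
        (nsmul_posPart_sub_nsmul_inf_le hw hy n))
    (le_inf hz hy)

/-- `hband` says that `w` lies in the band generated by `y`, so the parts `(w - n y)⁺` of `w`
beyond `n y` decrease to `0`. -/
lemma nonpos_of_forall_le_posPart_sub_nsmul {w y z : β} (hw : 0 ≤ w) (hy : 0 ≤ y)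
    (hband : ∀ d, 0 ≤ d → d ⊓ y = 0 → d ⊓ w = 0)
    (h : ∀ n : ℕ, z ≤ (w - n • y)⁺) : z ≤ 0 := by
  have hz : ∀ n : ℕ, z⁺ ≤ (w - n • y)⁺ := fun n => sup_le (h n) (posPart_nonneg _)
  have hzw : z⁺ ≤ w := by simpa [posPart_eq_self.2 hw] using hz 0
  have hdisj := hband _ (posPart_nonneg z)
    (inf_eq_zero_of_forall_le_posPart_sub_nsmul hw hy (posPart_nonneg z) hz)
  rw [inf_eq_left.2 hzw] at hdisj
  exact posPart_eq_zero.1 hdisj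

lemma sub_projP_inf_abs (f : β) {x : β} (hx : 0 ≤ x) : (x - projP f x) ⊓ |f| = 0 :=
  inf_eq_zero_of_forall_le_posPart_sub_nsmul hx (abs_nonneg f)
    (sub_nonneg.2 (projP_le f x)) fun n => by
      rw [← sub_inf_eq_posPart_sub]
      exact sub_le_sub_left ((isLUB_projP f x).1 ⟨n, rfl⟩) x

lemma projP_mem_Comp (f : β) {e : β} (he : 0 ≤ e) : projP f e ∈ Comp e := by
  set P := projP f e
  set d := P ⊓ (e - P)
  have hd : 0 ≤ d := le_inf (projP_nonneg f he) (sub_nonneg.2 (projP_le f e))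
  have hdf : d ⊓ |f| = 0 := le_antisymm
    ((inf_le_inf_right _ inf_le_right).trans_eq (sub_projP_inf_abs f he)) (le_inf hd (abs_nonneg f))
  have hPd : P ≤ P - d := (isLUB_projP f e).2 <| by
    rintro _ ⟨n, rfl⟩
    have hdisj : (e ⊓ n • |f|) ⊓ d = 0 := le_antisymm
      ((inf_le_inf_right d inf_le_right).trans_eq
        (by rw [inf_comm]; exact inf_nsmul_eq_zero hd (abs_nonneg f) hdf n))
      (le_inf (le_inf he (nsmul_nonneg (abs_nonneg f) n)) hd)
    rw [le_sub_iff_add_le, add_eq_sup_of_inf_eq_zero hdisj]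
    exact sup_le ((isLUB_projP f e).1 ⟨n, rfl⟩) inf_le_left
  exact le_antisymm ((le_sub_self_iff P).1 hPd) hd

lemma projP_posPart_sub_le {e r : β} (he : 0 ≤ e) (hr : 0 ≤ r) : projP (r - e)⁺ e ≤ r := by
  refine (isLUB_projP _ e).2 ?_
  rintro _ ⟨n, rfl⟩
  rw [abs_of_nonneg (posPart_nonneg _)]
  have hdisj : (r - e)⁻ ⊓ n • (r - e)⁺ = 0 :=
    inf_nsmul_eq_zero (negPart_nonneg _) (posPart_nonneg _)
      (by rw [inf_comm]; exact posPart_inf_negPart_eq_zero _) n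
  refine le_of_inf_eq_zero_of_le_add (b := (r - e)⁻) ?_ ?_ hr
  · refine le_antisymm ?_ (le_inf (le_inf he (nsmul_nonneg (posPart_nonneg _) n))
      (negPart_nonneg _))
    rw [inf_comm, ← hdisj]
    exact inf_le_inf_left _ inf_le_right
  · calc e ⊓ n • (r - e)⁺ ≤ r - ((r - e)⁺ - (r - e)⁻) := by
          rw [posPart_sub_negPart, sub_sub_cancel]; exact inf_le_left
      _ ≤ (r - e)⁻ + r := by
          rw [sub_sub_eq_add_sub, add_comm]; exact sub_le_self _ (posPart_nonneg _)

lemma sub_projP_posPart_sub_le {e r : β} (he : 0 ≤ e) (h : r - e ≤ e) :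
    r - projP (r - e)⁺ e ≤ e := by
  have hle := (isLUB_projP (r - e)⁺ e).1 ⟨1, rfl⟩
  rw [one_nsmul, abs_of_nonneg (posPart_nonneg _),
    inf_eq_right.2 (show (r - e)⁺ ≤ e from sup_le h he)] at hle
  exact sub_le_comm.1 ((le_posPart _).trans hle)

end DedekindComplete

section OrderedModule

variable {M : Type*} [Lattice M] [AddCommGroup M] [Module ℝ M] [PosSMulMono ℝ M]

lemma smul_le_abs_smul_abs (r : ℝ) (y : M) : r • y ≤ |r| • |y| := by
  rcases le_total 0 r with hr | hr
  · rw [abs_of_nonneg hr]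
    exact smul_le_smul_of_nonneg_left (le_abs_self y) hr
  · calc r • y = (-r) • (-y) := (neg_smul_neg r y).symm
      _ ≤ |r| • |y| := by
        rw [abs_of_nonpos hr]; exact smul_le_smul_of_nonneg_left (neg_le_abs y) (neg_nonneg.2 hr)

lemma abs_smul_le (r : ℝ) (y : M) : |r • y| ≤ |r| • |y| :=
  abs_le'.2 ⟨smul_le_abs_smul_abs r y,
    by simpa only [smul_neg, abs_neg] using smul_le_abs_smul_abs r (-y)⟩

end OrderedModule

section ChargeModulus

variable {E : Type*} [Lattice E] [AddCommGroup E] {e : E}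

lemma nonneg_of_mem_Comp {p : E} (hp : p ∈ Comp e) : 0 ≤ p :=
  (show p ⊓ (e - p) = 0 from hp) ▸ inf_le_left

lemma sub_mem_Comp {p : E} (hp : p ∈ Comp e) : e - p ∈ Comp e := by
  show (e - p) ⊓ (e - (e - p)) = 0
  rw [sub_sub_cancel, inf_comm]
  exact hp

lemma zero_mem_Comp (he : 0 ≤ e) : (0 : E) ∈ Comp e := by
  show (0 : E) ⊓ (e - 0) = 0
  rw [sub_zero, inf_of_le_left he]

lemma self_mem_Comp (he : 0 ≤ e) : e ∈ Comp e := by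
  simpa using sub_mem_Comp (zero_mem_Comp he)

lemma le_of_mem_Comp [CovariantClass E E (· + ·) (· ≤ ·)] {p : E} (hp : p ∈ Comp e) :
    p ≤ e :=
  sub_nonneg.1 (nonneg_of_mem_Comp (sub_mem_Comp hp))

variable {F : Type*} [AddCommGroup F]

lemma IsChargeOn.add [Lattice F] {μ ν : E → F} (hμ : IsChargeOn e μ) (hν : IsChargeOn e ν) :
    IsChargeOn e (fun p => μ p + ν p) :=
  ⟨by simp [hμ.1, hν.1], fun p q hp hq hpq => by
    simp only [hμ.2 p q hp hq hpq, hν.2 p q hp hq hpq]; abel⟩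

lemma IsChargeOn.map [Lattice F] {F' : Type*} [Lattice F'] [AddCommGroup F'] {μ : E → F}
    {φ : F → F'} (hφ : ∀ a b, φ (a + b) = φ a + φ b) (hμ : IsChargeOn e μ) :
    IsChargeOn e (fun p => φ (μ p)) :=
  ⟨by simpa [hμ.1] using hφ 0 0, fun p q hp hq hpq => by simp only [hμ.2 p q hp hq hpq, hφ]⟩

def chargeAbsSet (e : E) (μ : E → F) (p : E) : Set F :=
  {v | ∃ q, q ∈ Comp e ∧ q ≤ p ∧ v = μ q - μ (p - q)}

lemma chargeAbs_eq_sSup [ConditionallyCompleteLattice F] (μ : E → F) (p : E) :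
    chargeAbs e μ p = sSup (chargeAbsSet e μ p) :=
  rfl

lemma chargeAbsSet_nonempty (he : 0 ≤ e) (μ : E → F) : (chargeAbsSet e μ e).Nonempty :=
  ⟨_, 0, zero_mem_Comp he, he, rfl⟩

lemma chargeAbsSet_map {F' : Type*} [AddCommGroup F'] {μ : E → F} {φ : F → F'}
    (hφ : ∀ a b, φ (a - b) = φ a - φ b) (p : E) :
    chargeAbsSet e (fun p => φ (μ p)) p = φ '' chargeAbsSet e μ p := by
  ext w
  constructor
  · rintro ⟨q, hq, hqp, rfl⟩
    exact ⟨_, ⟨q, hq, hqp, rfl⟩, hφ _ _⟩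
  · rintro ⟨_, ⟨q, hq, hqp, rfl⟩, rfl⟩
    exact ⟨q, hq, hqp, hφ _ _⟩

lemma neg_mem_chargeAbsSet [CovariantClass E E (· + ·) (· ≤ ·)] {μ : E → F} {v : F}
    (hv : v ∈ chargeAbsSet e μ e) : -v ∈ chargeAbsSet e μ e := by
  obtain ⟨q, hq, -, rfl⟩ := hv
  exact ⟨e - q, sub_mem_Comp hq, sub_le_self e (nonneg_of_mem_Comp hq),
    by rw [sub_sub_cancel, neg_sub]⟩

lemma bddAbove_chargeAbsSet [Lattice F] [CovariantClass F F (· + ·) (· ≤ ·)] {μ : E → F}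
    (hμ : OrdBddOn e μ) : BddAbove (chargeAbsSet e μ e) := by
  obtain ⟨g, -, hg⟩ := hμ
  refine ⟨g + g, ?_⟩
  rintro _ ⟨q, hq, -, rfl⟩
  calc μ q - μ (e - q) ≤ |μ q| - -|μ (e - q)| :=
        sub_le_sub (le_abs_self _) (neg_le.1 (neg_le_abs _))
    _ ≤ g + g := by rw [sub_neg_eq_add]; exact add_le_add (hg q hq) (hg _ (sub_mem_Comp hq))

lemma chargeAbs_add_le [ConditionallyCompleteLattice F] [CovariantClass F F (· + ·) (· ≤ ·)]
    (he : 0 ≤ e) {μ ν : E → F} (hμ : OrdBddOn e μ) (hν : OrdBddOn e ν) :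
    chargeAbs e (fun p => μ p + ν p) e ≤ chargeAbs e μ e + chargeAbs e ν e := by
  refine csSup_le (chargeAbsSet_nonempty he _) ?_
  rintro _ ⟨q, hq, hqe, rfl⟩
  calc μ q + ν q - (μ (e - q) + ν (e - q)) = (μ q - μ (e - q)) + (ν q - ν (e - q)) := by
        abel
    _ ≤ chargeAbs e μ e + chargeAbs e ν e :=
        add_le_add (le_csSup (bddAbove_chargeAbsSet hμ) ⟨q, hq, hqe, rfl⟩)
          (le_csSup (bddAbove_chargeAbsSet hν) ⟨q, hq, hqe, rfl⟩)

lemma chargeAbs_eq_zero_iff [CovariantClass E E (· + ·) (· ≤ ·)]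
    [ConditionallyCompleteLattice F] [CovariantClass F F (· + ·) (· ≤ ·)] (he : 0 ≤ e)
    {μ : E → F} (hμ : IsChargeOn e μ) (hb : OrdBddOn e μ) :
    chargeAbs e μ e = 0 ↔ ∀ p ∈ Comp e, μ p = 0 := by
  constructor
  · intro h0
    have hsymm : ∀ q ∈ Comp e, μ q = μ (e - q) := fun q hq => by
      have hle : ∀ v ∈ chargeAbsSet e μ e, v ≤ 0 := fun v hv =>
        h0 ▸ le_csSup (bddAbove_chargeAbsSet hb) hv
      have hv : μ q - μ (e - q) ∈ chargeAbsSet e μ e := ⟨q, hq, le_of_mem_Comp hq, rfl⟩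
      exact le_antisymm (sub_nonpos.1 (hle _ hv))
        (by simpa only [neg_sub, sub_nonpos] using hle _ (neg_mem_chargeAbsSet hv))
    have hμe : μ e = 0 := by simpa [hμ.1] using hsymm e (self_mem_Comp he)
    intro p hp
    refine eq_zero_of_eq_neg (eq_neg_of_add_eq_zero_left ?_)
    calc μ p + μ p = μ p + μ (e - p) := by rw [← hsymm p hp]
      _ = 0 := by rw [← hμ.2 p (e - p) hp (sub_mem_Comp hp) hp, add_sub_cancel, hμe]
  · intro h0
    refine IsLUB.csSup_eq ⟨?_, fun w hw => hw ⟨0, zero_mem_Comp he, he, ?_⟩⟩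
      (chargeAbsSet_nonempty he μ)
    · rintro _ ⟨q, hq, -, rfl⟩
      rw [h0 q hq, h0 _ (sub_mem_Comp hq), sub_zero]
    · rw [h0 0 (zero_mem_Comp he), h0 _ (sub_mem_Comp (zero_mem_Comp he)), sub_zero]

end ChargeModulus

namespace IsFAlgebraMul

section Lattice

variable {β : Type*} [Lattice β] [AddCommGroup β] [Module ℝ β] {u : β}
  {mul : β → β → β}

lemma sub_mul (hm : IsFAlgebraMul u mul) (x y z : β) : mul (x - y) z = mul x z - mul y z :=
  eq_sub_of_add_eq (by rw [← hm.add_left, sub_add_cancel])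

lemma mul_sub (hm : IsFAlgebraMul u mul) (x y z : β) : mul x (y - z) = mul x y - mul x z := by
  rw [hm.comm, hm.sub_mul, hm.comm y, hm.comm z]

lemma mul_add (hm : IsFAlgebraMul u mul) (x y z : β) : mul x (y + z) = mul x y + mul x z := by
  rw [hm.comm, hm.add_left, hm.comm y, hm.comm z]

lemma mul_neg (hm : IsFAlgebraMul u mul) (x y : β) : mul x (-y) = -mul x y := by
  have h0 : mul x 0 = 0 := by simpa using hm.mul_sub x 0 0
  simpa [h0] using hm.mul_sub x 0 y

lemma nsmul_mul (hm : IsFAlgebraMul u mul) (n : ℕ) (x y : β) :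
    mul (n • x) y = n • mul x y := by
  rw [← Nat.cast_smul_eq_nsmul ℝ, hm.smul_left, Nat.cast_smul_eq_nsmul]

lemma mul_inf_mul_eq_zero (hm : IsFAlgebraMul u mul) {a b c d : β} (hab : a ⊓ b = 0)
    (hc : 0 ≤ c) (hd : 0 ≤ d) : mul a c ⊓ mul b d = 0 := by
  rw [inf_comm]
  exact hm.disj b _ d (by rw [inf_comm]; exact hm.disj a b c hab hc) hd

variable [CovariantClass β β (· + ·) (· ≤ ·)]

lemma mul_le_mul_of_nonneg_left (hm : IsFAlgebraMul u mul) {h a b : β} (hh : 0 ≤ h)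
    (hab : a ≤ b) : mul h a ≤ mul h b :=
  sub_nonneg.1 (hm.mul_sub h b a ▸ hm.mul_nonneg h _ hh (sub_nonneg.2 hab))

lemma mul_le_mul_of_nonneg_right (hm : IsFAlgebraMul u mul) {h a b : β} (hh : 0 ≤ h)
    (hab : a ≤ b) : mul a h ≤ mul b h := by
  rw [hm.comm a, hm.comm b]; exact hm.mul_le_mul_of_nonneg_left hh hab

lemma posPart_mul (hm : IsFAlgebraMul u mul) (x : β) {y : β} (hy : 0 ≤ y) :
    mul x⁺ y = (mul x y)⁺ := by
  conv_rhs => rw [← posPart_sub_negPart x, hm.sub_mul]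
  exact (posPart_sub_of_inf_eq_zero
    (hm.mul_inf_mul_eq_zero (posPart_inf_negPart_eq_zero x) hy hy)).symm

lemma abs_mul_of_nonneg (hm : IsFAlgebraMul u mul) (x : β) {y : β} (hy : 0 ≤ y) :
    |mul x y| = mul |x| y := by
  have hpos := hm.mul_nonneg _ _ (posPart_nonneg x) hy
  have hneg := hm.mul_nonneg _ _ (negPart_nonneg x) hy
  calc |mul x y| = |mul x⁺ y - mul x⁻ y| := by rw [← hm.sub_mul, posPart_sub_negPart]
    _ = |mul x⁺ y| + |mul x⁻ y| := abs_sub_eq_add_of_inf_eq_zero <| by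
        rw [abs_of_nonneg hpos, abs_of_nonneg hneg]
        exact hm.mul_inf_mul_eq_zero (posPart_inf_negPart_eq_zero x) hy hy
    _ = mul |x| y := by
        rw [abs_of_nonneg hpos, abs_of_nonneg hneg, ← hm.add_left, posPart_add_negPart]

lemma abs_mul (hm : IsFAlgebraMul u mul) (a b : β) : |mul a b| = mul |a| |b| := by
  have habs : ∀ c, 0 ≤ c → |mul c b| = mul c |b| := fun c hc => by
    rw [hm.comm, hm.abs_mul_of_nonneg b hc, hm.comm]
  calc |mul a b| = |mul a⁺ b - mul a⁻ b| := by rw [← hm.sub_mul, posPart_sub_negPart]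
    _ = |mul a⁺ b| + |mul a⁻ b| := abs_sub_eq_add_of_inf_eq_zero <| by
        rw [habs _ (posPart_nonneg a), habs _ (negPart_nonneg a)]
        exact hm.mul_inf_mul_eq_zero (posPart_inf_negPart_eq_zero a) (abs_nonneg b) (abs_nonneg b)
    _ = mul |a| |b| := by
        rw [habs _ (posPart_nonneg a), habs _ (negPart_nonneg a), ← hm.add_left,
          posPart_add_negPart]

end Lattice

section ConditionallyComplete

variable {β : Type*} [ConditionallyCompleteLattice β] [AddCommGroup β] [Module ℝ β]
  [CovariantClass β β (· + ·) (· ≤ ·)] {u : β} {mul : β → β → β}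

lemma isLUB_projChain_mul (hm : IsFAlgebraMul u mul) {p x : β} (hp : p ⊓ (u - p) = 0)
    (hx : 0 ≤ x) : IsLUB (projChain p x) (mul p x) := by
  have hp0 : 0 ≤ p := hp ▸ inf_le_left
  have hq0 : 0 ≤ u - p := hp ▸ inf_le_right
  have hsplit : mul (u - p) x + mul p x = x := by rw [← hm.add_left, sub_add_cancel, hm.one_mul]
  have hdisj : ∀ d, 0 ≤ d → d ⊓ p = 0 → d ⊓ mul p x = 0 := fun d _ hd => by
    rw [inf_comm]; exact hm.disj p d x (by rwa [inf_comm]) hx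
  show IsLUB {y | ∃ n : ℕ, y = x ⊓ n • |p|} _
  rw [abs_of_nonneg hp0]
  constructor
  · rintro _ ⟨n, rfl⟩
    refine le_of_inf_eq_zero_of_le_add (b := mul (u - p) x) ?_ (inf_le_left.trans_eq hsplit.symm)
      (hm.mul_nonneg _ _ hp0 hx)
    refine le_antisymm ((inf_le_inf_right _ inf_le_right).trans_eq ?_)
      (le_inf (le_inf hx (nsmul_nonneg hp0 n)) (hm.mul_nonneg _ _ hq0 hx))
    rw [inf_comm]
    exact inf_nsmul_eq_zero (hm.mul_nonneg _ _ hq0 hx) hp0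
      (hm.disj _ p x (by rwa [inf_comm]) hx) n
  · intro t ht
    have hpx : mul p x ≤ x := (le_add_of_nonneg_left (hm.mul_nonneg _ _ hq0 hx)).trans_eq hsplit
    refine sub_nonpos.1 (nonpos_of_forall_le_posPart_sub_nsmul (hm.mul_nonneg _ _ hp0 hx) hp0
      hdisj fun n => ?_)
    rw [← sub_inf_eq_posPart_sub]
    exact sub_le_sub_left ((inf_le_inf_right _ hpx).trans (ht ⟨n, rfl⟩)) _

lemma nonpos_of_forall_le_mul_posPart_sub_nsmul (hm : IsFAlgebraMul u mul) {h y z : β}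
    (hh : 0 ≤ h) (hy : 0 ≤ y) (hz : ∀ n : ℕ, z ≤ mul (h - n • u)⁺ y) : z ≤ 0 := by
  refine nonpos_of_forall_le_posPart_sub_nsmul (hm.mul_nonneg h y hh hy) hy
    (fun d _ hd => ?_) fun n => (hz n).trans_eq ?_
  · rw [inf_comm, hm.comm]; exact hm.disj y d h (by rwa [inf_comm]) hh
  · rw [hm.posPart_mul _ hy, hm.sub_mul, hm.nsmul_mul, hm.one_mul]

variable [PosSMulMono ℝ β]

/-- Order continuity of multiplication by `h ≥ 0`: if `D ↓ 0` then `h D ↓ 0`. -/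
lemma nonpos_of_forall_le_mul_of_isGLB (hm : IsFAlgebraMul u mul) {h Y z : β} {D : Set β}
    (hh : 0 ≤ h) (hD : IsGLB D 0) (hne : D.Nonempty) (hY : ∀ y ∈ D, y ≤ Y)
    (hz : ∀ y ∈ D, z ≤ mul h y) : z ≤ 0 := by
  obtain ⟨y₀, hy₀⟩ := hne
  have hD0 : ∀ y ∈ D, 0 ≤ y := hD.1
  refine hm.nonpos_of_forall_le_mul_posPart_sub_nsmul hh ((hD0 y₀ hy₀).trans (hY y₀ hy₀))
    fun n => ?_
  set r := mul (h - n • u)⁺ Y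
  have hbound : ∀ y ∈ D, z - r ≤ ((n + 1 : ℕ) : ℝ) • y := fun y hy => by
    have hsplit : mul h y = mul (h ⊓ n • u) y + mul (h - n • u)⁺ y := by
      rw [← hm.add_left, ← sub_inf_eq_posPart_sub, add_sub_cancel]
    have hlow : mul (h ⊓ n • u) y ≤ ((n + 1 : ℕ) : ℝ) • y :=
      calc mul (h ⊓ n • u) y ≤ mul (n • u) y :=
            hm.mul_le_mul_of_nonneg_right (hD0 y hy) inf_le_right
        _ = n • y := by rw [hm.nsmul_mul, hm.one_mul]
        _ ≤ (n + 1) • y := by rw [succ_nsmul]; exact le_add_of_nonneg_right (hD0 y hy)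
        _ = ((n + 1 : ℕ) : ℝ) • y := (Nat.cast_smul_eq_nsmul ℝ _ _).symm
    rw [sub_le_iff_le_add]
    calc z ≤ mul h y := hz y hy
      _ = mul (h ⊓ n • u) y + mul (h - n • u)⁺ y := hsplit
      _ ≤ ((n + 1 : ℕ) : ℝ) • y + r :=
          add_le_add hlow (hm.mul_le_mul_of_nonneg_left (posPart_nonneg _) (hY y hy))
  have hpos : (0 : ℝ) < ((n + 1 : ℕ) : ℝ) := by positivity
  have hlow := hD.2 fun y hy => (inv_smul_le_iff_of_pos hpos).2 (hbound y hy)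
  rw [inv_smul_le_iff_of_pos hpos, smul_zero] at hlow
  exact sub_nonpos.1 hlow

lemma isLUB_image_mul (hm : IsFAlgebraMul u mul) {A : Set β} {a : β}
    (hne : A.Nonempty) (hneg : ∀ v ∈ A, -v ∈ A) (ha : IsLUB A a) (c : β) :
    IsLUB ((fun v => mul c v) '' A) (mul |c| a) := by
  have habs : ∀ v ∈ A, |v| ≤ a := fun v hv => abs_le'.2 ⟨ha.1 hv, ha.1 (hneg v hv)⟩
  refine ⟨?_, fun t ht => ?_⟩
  · rintro _ ⟨v, hv, rfl⟩
    exact (le_abs_self _).trans ((hm.abs_mul c v).trans_le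
      (hm.mul_le_mul_of_nonneg_left (abs_nonneg c) (habs v hv)))
  have hle : ∀ v ∈ A, mul |c| |v| ≤ t := fun v hv => by
    rw [← hm.abs_mul]
    refine abs_le'.2 ⟨ht ⟨v, hv, rfl⟩, ?_⟩
    rw [← hm.mul_neg]; exact ht ⟨-v, hneg v hv, rfl⟩
  obtain ⟨v₀, hv₀⟩ := hne
  refine sub_nonpos.1 (hm.nonpos_of_forall_le_mul_of_isGLB (abs_nonneg c) (Y := a)
    (D := (fun v => a - |v|) '' A) ⟨?_, ?_⟩ ⟨_, v₀, hv₀, rfl⟩ ?_ ?_)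
  · rintro _ ⟨v, hv, rfl⟩; exact sub_nonneg.2 (habs v hv)
  · intro w hw
    refine (le_sub_self_iff a).1 (ha.2 fun v hv => (le_abs_self v).trans ?_)
    exact le_sub_comm.1 (hw ⟨v, hv, rfl⟩)
  · rintro _ ⟨v, _, rfl⟩; exact sub_le_self a (abs_nonneg v)
  · rintro _ ⟨v, hv, rfl⟩
    rw [hm.mul_sub]; exact sub_le_sub_left (hle v hv) _

end ConditionallyComplete

end IsFAlgebraMul

namespace IsUnivCompletion

variable {E : Type*} {G : Type*} [ConditionallyCompleteLattice E] [AddCommGroup E] [Module ℝ E]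
  [ConditionallyCompleteLattice G] [AddCommGroup G] [Module ℝ G] {j : E →ₗ[ℝ] G}

lemma map_abs (hj : IsUnivCompletion j) (x : E) : j |x| = |j x| := by
  rw [abs, abs, hj.latHom, map_neg]

lemma map_posPart (hj : IsUnivCompletion j) (x : E) : j x⁺ = (j x)⁺ := by
  rw [posPart_def, posPart_def, hj.latHom, map_zero]

variable [CovariantClass E E (· + ·) (· ≤ ·)] [CovariantClass G G (· + ·) (· ≤ ·)]

lemma map_inf (hj : IsUnivCompletion j) (x y : E) : j (x ⊓ y) = j x ⊓ j y := by
  rw [← neg_neg (x ⊓ y), neg_inf, map_neg, hj.latHom, map_neg, map_neg, neg_sup, neg_neg,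
    neg_neg]

lemma image_projChain (hj : IsUnivCompletion j) (f x : E) :
    j '' projChain f x = projChain (j f) (j x) := by
  ext w
  constructor
  · rintro ⟨_, ⟨n, rfl⟩, rfl⟩
    exact ⟨n, by rw [hj.map_inf, map_nsmul, hj.map_abs]⟩
  · rintro ⟨n, rfl⟩
    exact ⟨_, ⟨n, rfl⟩, by rw [hj.map_inf, map_nsmul, hj.map_abs]⟩

lemma le_iff (hj : IsUnivCompletion j) {x y : E} : j x ≤ j y ↔ x ≤ y := by
  rw [← sub_nonneg, ← map_sub, hj.bipos, sub_nonneg]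

lemma injective (hj : IsUnivCompletion j) : Function.Injective j :=
  fun _ _ h => le_antisymm (hj.le_iff.1 h.le) (hj.le_iff.1 h.ge)

lemma isLUB_of_isLUB_image (hj : IsUnivCompletion j) {A : Set E} {s : E}
    (h : IsLUB (j '' A) (j s)) : IsLUB A s :=
  ⟨fun _ ha => hj.le_iff.1 (h.1 ⟨_, ha, rfl⟩),
    fun _ hw => hj.le_iff.1 (h.2 (by rintro _ ⟨a, ha, rfl⟩; exact hj.le_iff.2 (hw ha)))⟩

lemma isLUB_image (hj : IsUnivCompletion j) {A : Set E} {s : E} (h : IsLUB A s) :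
    IsLUB (j '' A) (j s) := by
  refine ⟨by rintro _ ⟨a, ha, rfl⟩; exact hj.le_iff.2 (h.1 ha), fun w hw => ?_⟩
  by_contra hsw
  have hpos : 0 < (j s - w)⁺ :=
    lt_of_le_of_ne (posPart_nonneg _) fun h0 => hsw (sub_nonpos.1 (posPart_eq_zero.1 h0.symm))
  obtain ⟨x, hx, hxs⟩ := hj.dense _ hpos
  have hub : s ≤ s - x := h.2 fun a ha => hj.le_iff.1 <|
    calc j a ≤ j s ⊓ w := le_inf (hj.le_iff.2 (h.1 ha)) (hw ⟨a, ha, rfl⟩)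
      _ = j s - (j s - w)⁺ := by rw [← sub_inf_eq_posPart_sub, sub_sub_cancel]
      _ ≤ j (s - x) := by rw [map_sub]; exact sub_le_sub_left hxs _
  have hx0 : j x ≤ j 0 := hj.le_iff.2 ((le_sub_self_iff s).1 hub)
  exact lt_irrefl _ (hx.trans_le (hx0.trans_eq (map_zero j)))

end IsUnivCompletion

namespace CRT

variable {E : Type u} {G : Type v}
variable [ConditionallyCompleteLattice E] [AddCommGroup E] [Module ℝ E]
  [CovariantClass E E (· + ·) (· ≤ ·)] [PosSMulMono ℝ E]
variable [ConditionallyCompleteLattice G] [AddCommGroup G] [Module ℝ G]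
  [CovariantClass G G (· + ·) (· ≤ ·)] [PosSMulMono ℝ G]
variable (C : CRT E G)

lemma e_nonneg : 0 ≤ C.e := C.triple.weakUnit.1.le

lemma e_mem_R : C.e ∈ C.R := ⟨C.e, C.triple.unitFix⟩

lemma zero_mem_R : (0 : E) ∈ C.R := (LinearMap.range C.T).zero_mem

variable {C}

lemma add_mem_R {x y : E} (hx : x ∈ C.R) (hy : y ∈ C.R) : x + y ∈ C.R :=
  (LinearMap.range C.T).add_mem hx hy

lemma sub_mem_R {x y : E} (hx : x ∈ C.R) (hy : y ∈ C.R) : x - y ∈ C.R :=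
  (LinearMap.range C.T).sub_mem hx hy

lemma smul_mem_R (r : ℝ) {x : E} (hx : x ∈ C.R) : r • x ∈ C.R :=
  (LinearMap.range C.T).smul_mem r hx

lemma nsmul_mem_R (n : ℕ) {x : E} (hx : x ∈ C.R) : n • x ∈ C.R :=
  (LinearMap.range C.T).toAddSubmonoid.nsmul_mem hx n

lemma neg_mem_R {x : E} (hx : x ∈ C.R) : -x ∈ C.R :=
  (LinearMap.range C.T).neg_mem hx

lemma sup_mem_R {x y : E} (hx : x ∈ C.R) (hy : y ∈ C.R) : x ⊔ y ∈ C.R :=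
  C.triple.rangeSupClosed x y hx hy

lemma inf_mem_R {x y : E} (hx : x ∈ C.R) (hy : y ∈ C.R) : x ⊓ y ∈ C.R := by
  rw [← neg_neg (x ⊓ y), neg_inf]
  exact neg_mem_R (sup_mem_R (neg_mem_R hx) (neg_mem_R hy))

lemma abs_mem_R {x : E} (hx : x ∈ C.R) : |x| ∈ C.R :=
  sup_mem_R hx (neg_mem_R hx)

lemma posPart_mem_R {x : E} (hx : x ∈ C.R) : x⁺ ∈ C.R := sup_mem_R hx C.zero_mem_R

lemma negPart_mem_R {x : E} (hx : x ∈ C.R) : x⁻ ∈ C.R :=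
  sup_mem_R (neg_mem_R hx) C.zero_mem_R

lemma mem_R_of_isLUB {S : Set E} {y : E} (hS : S ⊆ C.R) (hne : S.Nonempty) (h : IsLUB S y) :
    y ∈ C.R :=
  h.csSup_eq hne ▸ C.triple.rangeDedekind S hS hne h.bddAbove

lemma projP_mem_R {f x : E} (hf : f ∈ C.R) (hx : x ∈ C.R) : projP f x ∈ C.R :=
  mem_R_of_isLUB (S := projChain f x)
    (by rintro _ ⟨n, rfl⟩; exact inf_mem_R hx (nsmul_mem_R n (abs_mem_R hf)))
    ⟨_, 0, rfl⟩ (isLUB_projP f x)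

lemma j_sm {g : E} (hg : g ∈ C.R) (f : E) : C.j (C.sm g f) = C.mul (C.j g) (C.j f) :=
  Function.invFun_eq (C.mulClosed g f ⟨|g|, abs_mem_R hg, abs_nonneg g, le_rfl⟩)

lemma sm_add_right {g : E} (hg : g ∈ C.R) (x y : E) : C.sm g (x + y) = C.sm g x + C.sm g y :=
  C.compl.injective <| by rw [map_add, j_sm hg, j_sm hg, j_sm hg, map_add, C.falg.mul_add]

lemma sm_sub_right {g : E} (hg : g ∈ C.R) (x y : E) : C.sm g (x - y) = C.sm g x - C.sm g y :=
  C.compl.injective <| by rw [map_sub, j_sm hg, j_sm hg, j_sm hg, map_sub, C.falg.mul_sub]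

lemma sm_add_left {g g' : E} (hg : g ∈ C.R) (hg' : g' ∈ C.R) (x : E) :
    C.sm (g + g') x = C.sm g x + C.sm g' x :=
  C.compl.injective <| by
    rw [map_add, j_sm (add_mem_R hg hg'), j_sm hg, j_sm hg', map_add, C.falg.add_left]

lemma sm_sub_left {g g' : E} (hg : g ∈ C.R) (hg' : g' ∈ C.R) (x : E) :
    C.sm (g - g') x = C.sm g x - C.sm g' x :=
  C.compl.injective <| by
    rw [map_sub, j_sm (sub_mem_R hg hg'), j_sm hg, j_sm hg', map_sub, C.falg.sub_mul]

lemma sm_smul_left {g : E} (hg : g ∈ C.R) (r : ℝ) (x : E) : C.sm (r • g) x = r • C.sm g x :=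
  C.compl.injective <| by
    rw [map_smul, j_sm (smul_mem_R r hg), j_sm hg, map_smul, C.falg.smul_left]

lemma sm_e (x : E) : C.sm C.e x = x :=
  C.compl.injective <| by rw [j_sm C.e_mem_R, C.falg.one_mul]

lemma sm_nonneg {g x : E} (hg : g ∈ C.R) (hg0 : 0 ≤ g) (hx0 : 0 ≤ x) : 0 ≤ C.sm g x := by
  rw [← C.compl.bipos, j_sm hg]
  exact C.falg.mul_nonneg _ _ ((C.compl.bipos g).2 hg0) ((C.compl.bipos x).2 hx0)

lemma sm_mono_left {g g' x : E} (hg : g ∈ C.R) (hg' : g' ∈ C.R) (hx0 : 0 ≤ x)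
    (hle : g ≤ g') : C.sm g x ≤ C.sm g' x := by
  rw [← C.compl.le_iff, j_sm hg, j_sm hg']
  exact C.falg.mul_le_mul_of_nonneg_right ((C.compl.bipos x).2 hx0) (C.compl.le_iff.2 hle)

lemma sm_mono_right {g x y : E} (hg : g ∈ C.R) (hg0 : 0 ≤ g) (hle : x ≤ y) :
    C.sm g x ≤ C.sm g y := by
  rw [← C.compl.le_iff, j_sm hg, j_sm hg]
  exact C.falg.mul_le_mul_of_nonneg_left ((C.compl.bipos g).2 hg0) (C.compl.le_iff.2 hle)

lemma abs_sm {g : E} (hg : g ∈ C.R) (x : E) : |C.sm g x| = C.sm |g| |x| :=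
  C.compl.injective <| by
    rw [C.compl.map_abs, j_sm hg, j_sm (abs_mem_R hg), C.compl.map_abs, C.compl.map_abs,
      C.falg.abs_mul]

lemma sm_mem_R_of_mem_Comp {p x : E} (hp : p ∈ C.R) (hpe : p ∈ Comp C.e) (hx : x ∈ C.R)
    (hx0 : 0 ≤ x) : C.sm p x ∈ C.R := by
  have hjp : C.j p ⊓ (C.j C.e - C.j p) = 0 := by
    rw [← map_sub, ← C.compl.map_inf, show p ⊓ (C.e - p) = 0 from hpe, map_zero]
  have hlub : IsLUB (projChain p x) (C.sm p x) := C.compl.isLUB_of_isLUB_image <| by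
    rw [C.compl.image_projChain, j_sm hp]
    exact C.falg.isLUB_projChain_mul hjp ((C.compl.bipos x).2 hx0)
  rw [hlub.unique (isLUB_projP p x)]
  exact projP_mem_R hp hx

/-- Halving the bound `t` on `g`, the component `q` of `e` on which `g > t / 2` is peeled off:
`g = (g - (t/2) q) + (t/2) q` with `0 ≤ g - (t/2) q ≤ (t/2) e`, and `q x ∈ R(T)`. -/
lemma exists_mem_R_le_sm_sub_le {x : E} (hx : x ∈ C.R) (hx0 : 0 ≤ x) (k : ℕ) :
    ∀ t : ℝ, 0 < t → ∀ g ∈ C.R, 0 ≤ g → g ≤ t • C.e →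
      ∃ F ∈ C.R, F ≤ C.sm g x ∧ C.sm g x - F ≤ (t / 2 ^ k) • x := by
  induction k with
  | zero =>
    intro t _ g hg hg0 hgt
    refine ⟨0, C.zero_mem_R, sm_nonneg hg hg0 hx0, ?_⟩
    have hle := sm_mono_left hg (smul_mem_R t C.e_mem_R) hx0 hgt
    rw [sm_smul_left C.e_mem_R, sm_e] at hle
    simpa using hle
  | succ k ih =>
    intro t ht g hg hg0 hgt
    set s := t / 2
    have hs : 0 < s := by positivity
    set q := projP (s⁻¹ • g - C.e)⁺ C.e
    have hq : q ∈ C.R :=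
      projP_mem_R (posPart_mem_R (sub_mem_R (smul_mem_R _ hg) C.e_mem_R)) C.e_mem_R
    have hsq : s • q ≤ g := (le_inv_smul_iff_of_pos hs).1
      (projP_posPart_sub_le C.e_nonneg (smul_nonneg (inv_nonneg.2 hs.le) hg0))
    have hgq : g - s • q ≤ s • C.e := by
      have hle : s⁻¹ • g - C.e ≤ C.e := by
        rw [sub_le_iff_le_add, inv_smul_le_iff_of_pos hs, ← two_smul ℝ, smul_smul]
        simpa [s] using hgt
      calc g - s • q = s • (s⁻¹ • g - q) := by rw [smul_sub, smul_inv_smul₀ hs.ne']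
        _ ≤ s • C.e :=
            smul_le_smul_of_nonneg_left (sub_projP_posPart_sub_le C.e_nonneg hle) hs.le
    have hg' : g - s • q ∈ C.R := sub_mem_R hg (smul_mem_R s hq)
    obtain ⟨F, hF, hFle, hFerr⟩ := ih s hs (g - s • q) hg' (sub_nonneg.2 hsq) hgq
    have hsplit : C.sm g x = C.sm (g - s • q) x + s • C.sm q x := by
      rw [← sm_smul_left hq, ← sm_add_left hg' (smul_mem_R s hq), sub_add_cancel]
    have hqx : C.sm q x ∈ C.R := sm_mem_R_of_mem_Comp hq (projP_mem_Comp _ C.e_nonneg) hx hx0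
    refine ⟨F + s • C.sm q x, add_mem_R hF (smul_mem_R s hqx), ?_, ?_⟩
    · rw [hsplit]; exact add_le_add hFle le_rfl
    · rw [hsplit, add_sub_add_right_eq_sub]
      calc _ ≤ (s / 2 ^ k) • x := hFerr
        _ = (t / 2 ^ (k + 1)) • x := by congr 1; simp only [s, pow_succ]; ring

lemma sm_mem_R_of_le_smul_e {g x : E} (hg : g ∈ C.R) (hg0 : 0 ≤ g) {t : ℝ} (ht : 0 < t)
    (hgt : g ≤ t • C.e) (hx : x ∈ C.R) (hx0 : 0 ≤ x) : C.sm g x ∈ C.R := by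
  refine mem_R_of_isLUB (S := {F | F ∈ C.R ∧ F ≤ C.sm g x}) (fun F hF => hF.1)
    ⟨0, C.zero_mem_R, sm_nonneg hg hg0 hx0⟩ ⟨fun F hF => hF.2, fun w hw => ?_⟩
  refine sub_nonpos.1 (nonpos_of_forall_nsmul_le (X := t • x) fun n => ?_)
  obtain ⟨F, hF, hFle, hFerr⟩ := exists_mem_R_le_sm_sub_le hx hx0 n t ht g hg hg0 hgt
  have hn : (n : ℝ) * (t / 2 ^ n) ≤ t := by
    have h2n : (n : ℝ) ≤ 2 ^ n := by exact_mod_cast Nat.lt_two_pow_self.le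
    rw [mul_div_assoc', div_le_iff₀ (by positivity)]
    nlinarith
  calc n • (C.sm g x - w) ≤ n • (C.sm g x - F) :=
        nsmul_le_nsmul_right (sub_le_sub_left (hw ⟨hF, hFle⟩) _) n
    _ ≤ n • ((t / 2 ^ n) • x) := nsmul_le_nsmul_right hFerr n
    _ = ((n : ℝ) * (t / 2 ^ n)) • x := by rw [← Nat.cast_smul_eq_nsmul ℝ, smul_smul]
    _ ≤ t • x := sub_nonneg.1 (by rw [← sub_smul]; exact smul_nonneg (sub_nonneg.2 hn) hx0)

lemma sm_mem_R_of_nonneg {g x : E} (hg : g ∈ C.R) (hg0 : 0 ≤ g) (hx : x ∈ C.R)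
    (hx0 : 0 ≤ x) : C.sm g x ∈ C.R := by
  have htrunc : ∀ n : ℕ, g ⊓ n • C.e ∈ C.R := fun n =>
    inf_mem_R hg (nsmul_mem_R n C.e_mem_R)
  have hbound : ∀ n : ℕ, g ⊓ n • C.e ≤ ((n : ℝ) + 1) • C.e := fun n => by
    rw [add_smul, one_smul, Nat.cast_smul_eq_nsmul]
    exact inf_le_right.trans (le_add_of_nonneg_right C.e_nonneg)
  have hmem : ∀ n : ℕ, C.sm (g ⊓ n • C.e) x ∈ C.R := fun n =>
    sm_mem_R_of_le_smul_e (htrunc n) (le_inf hg0 (nsmul_nonneg C.e_nonneg n)) (by positivity)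
      (hbound n) hx hx0
  refine mem_R_of_isLUB (S := {F | F ∈ C.R ∧ F ≤ C.sm g x}) (fun F hF => hF.1)
    ⟨0, C.zero_mem_R, sm_nonneg hg hg0 hx0⟩ ⟨fun F hF => hF.2, fun w hw => ?_⟩
  rw [← sub_nonpos, ← C.compl.le_iff, map_zero]
  refine C.falg.nonpos_of_forall_le_mul_posPart_sub_nsmul ((C.compl.bipos g).2 hg0)
    ((C.compl.bipos x).2 hx0) fun n => ?_
  have hw' : C.sm (g ⊓ n • C.e) x ≤ w :=
    hw ⟨hmem n, sm_mono_left (htrunc n) hg hx0 inf_le_left⟩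
  have hpos : (g - n • C.e)⁺ ∈ C.R := posPart_mem_R (sub_mem_R hg (nsmul_mem_R n C.e_mem_R))
  calc C.j (C.sm g x - w) ≤ C.j (C.sm g x - C.sm (g ⊓ n • C.e) x) :=
        C.compl.le_iff.2 (sub_le_sub_left hw' _)
    _ = C.mul (C.j g - n • C.j C.e)⁺ (C.j x) := by
        rw [← sm_sub_left hg (htrunc n), sub_inf_eq_posPart_sub, j_sm hpos, C.compl.map_posPart,
          map_sub, map_nsmul]

lemma sm_mem_R {g x : E} (hg : g ∈ C.R) (hx : x ∈ C.R) : C.sm g x ∈ C.R := by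
  have hleft : ∀ a ∈ C.R, 0 ≤ a → C.sm a x ∈ C.R := fun a ha ha0 => by
    rw [← posPart_sub_negPart x, sm_sub_right ha]
    exact sub_mem_R (sm_mem_R_of_nonneg ha ha0 (posPart_mem_R hx) (posPart_nonneg x))
      (sm_mem_R_of_nonneg ha ha0 (negPart_mem_R hx) (negPart_nonneg x))
  rw [← posPart_sub_negPart g, sm_sub_left (posPart_mem_R hg) (negPart_mem_R hg)]
  exact sub_mem_R (hleft _ (posPart_mem_R hg) (posPart_nonneg g))
    (hleft _ (negPart_mem_R hg) (negPart_nonneg g))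

variable (C)

lemma ordBddOn_of_mem_baR {u : E} {μ : E → E} (hμ : μ ∈ C.baR u) : OrdBddOn u μ :=
  let ⟨_, _, g, _, hg0, hg⟩ := hμ
  ⟨g, hg0, hg⟩

lemma add_mem_baR {u : E} {μ ν : E → E} (hμ : μ ∈ C.baR u) (hν : ν ∈ C.baR u) :
    (fun p => μ p + ν p) ∈ C.baR u := by
  obtain ⟨hμc, hμR, g, hg, hg0, hgμ⟩ := hμ
  obtain ⟨hνc, hνR, g', hg', hg'0, hg'ν⟩ := hν
  exact ⟨hμc.add hνc, fun p hp => add_mem_R (hμR p hp) (hνR p hp), g + g', add_mem_R hg hg',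
    add_nonneg hg0 hg'0, fun p hp => (abs_add_le _ _).trans (add_le_add (hgμ p hp) (hg'ν p hp))⟩

lemma smul_mem_baR {u : E} {μ : E → E} (hμ : μ ∈ C.baR u) (r : ℝ) :
    (fun p => r • μ p) ∈ C.baR u := by
  obtain ⟨hμc, hμR, g, hg, hg0, hgμ⟩ := hμ
  exact ⟨hμc.map (smul_add r), fun p hp => smul_mem_R r (hμR p hp), |r| • g, smul_mem_R _ hg,
    smul_nonneg (abs_nonneg r) hg0,
    fun p hp => (abs_smul_le r _).trans (smul_le_smul_of_nonneg_left (hgμ p hp) (abs_nonneg r))⟩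

lemma sm_mem_baR {u : E} {μ : E → E} (hμ : μ ∈ C.baR u) {g : E} (hg : g ∈ C.R) :
    (fun p => C.sm g (μ p)) ∈ C.baR u := by
  obtain ⟨hμc, hμR, b, hb, hb0, hbμ⟩ := hμ
  refine ⟨hμc.map (sm_add_right hg), fun p hp => sm_mem_R hg (hμR p hp), C.sm |g| b,
    sm_mem_R (abs_mem_R hg) hb, sm_nonneg (abs_mem_R hg) (abs_nonneg g) hb0, fun p hp => ?_⟩
  rw [abs_sm hg]
  exact sm_mono_right (abs_mem_R hg) (abs_nonneg g) (hbμ p hp)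

lemma isLUB_image_sm {g : E} (hg : g ∈ C.R) {A : Set E} {a : E} (hne : A.Nonempty)
    (hneg : ∀ v ∈ A, -v ∈ A) (ha : IsLUB A a) :
    IsLUB ((fun v => C.sm g v) '' A) (C.sm |g| a) := by
  refine C.compl.isLUB_of_isLUB_image ?_
  have himg : C.j '' ((fun v => C.sm g v) '' A) = (fun v => C.mul (C.j g) v) '' (C.j '' A) := by
    simp only [Set.image_image, j_sm hg]
  rw [himg, j_sm (abs_mem_R hg), C.compl.map_abs]
  exact C.falg.isLUB_image_mul (hne.image C.j)
    (by rintro _ ⟨v, hv, rfl⟩; exact ⟨-v, hneg v hv, map_neg _ _⟩) (C.compl.isLUB_image ha)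
    (C.j g)

lemma chargeAbs_sm {μ : E → E} (hμ : μ ∈ C.baR C.e) {g : E} (hg : g ∈ C.R) :
    chargeAbs C.e (fun p => C.sm g (μ p)) C.e = C.sm |g| (chargeAbs C.e μ C.e) := by
  have hne := chargeAbsSet_nonempty C.e_nonneg μ
  have hlub := isLUB_csSup hne (bddAbove_chargeAbsSet (C.ordBddOn_of_mem_baR hμ))
  rw [chargeAbs_eq_sSup, chargeAbs_eq_sSup, chargeAbsSet_map (sm_sub_right hg)]
  exact (C.isLUB_image_sm hg hne (fun _ hv => neg_mem_chargeAbsSet hv) hlub).csSup_eq (hne.image _)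

end CRT

/-- Let `(E,e,T)` be a `T`-universally complete conditional Riesz
triple.  Then `ba(C_e, R(T))` is an `R(T)`-module under pointwise operations, and
`μ ↦ |μ|(e)` is an `R(T)`-valued norm on it: it satisfies the triangle inequality,
`‖gμ‖ = |g|·‖μ‖` for `g ∈ R(T)`, and `‖μ‖ = 0` iff `μ = 0` (on components). -/
theorem ba_module_and_norm {E : Type u} {G : Type v}
    [ConditionallyCompleteLattice E] [AddCommGroup E] [Module ℝ E]
    [CovariantClass E E (· + ·) (· ≤ ·)] [PosSMulMono ℝ E]
    [ConditionallyCompleteLattice G] [AddCommGroup G] [Module ℝ G]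
    [CovariantClass G G (· + ·) (· ≤ ·)] [PosSMulMono ℝ G]
    (C : CRT E G) :
    -- `ba(C_e,R(T))` is an R(T)-module under pointwise operations
    (∀ μ ∈ C.baR C.e, ∀ ν ∈ C.baR C.e, (fun p => μ p + ν p) ∈ C.baR C.e) ∧
    (∀ μ ∈ C.baR C.e, ∀ r : ℝ, (fun p => r • μ p) ∈ C.baR C.e) ∧
    (∀ μ ∈ C.baR C.e, ∀ g ∈ C.R, (fun p => C.sm g (μ p)) ∈ C.baR C.e) ∧
    -- the triangle inequality
    (∀ μ ∈ C.baR C.e, ∀ ν ∈ C.baR C.e,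
      chargeAbs C.e (fun p => μ p + ν p) C.e ≤ chargeAbs C.e μ C.e + chargeAbs C.e ν C.e) ∧
    -- absolute homogeneity
    (∀ μ ∈ C.baR C.e, ∀ g ∈ C.R,
      chargeAbs C.e (fun p => C.sm g (μ p)) C.e = C.sm |g| (chargeAbs C.e μ C.e)) ∧
    -- definiteness
    (∀ μ ∈ C.baR C.e, (chargeAbs C.e μ C.e = 0 ↔ ∀ p ∈ Comp C.e, μ p = 0)) :=
  ⟨fun _ hμ _ hν => C.add_mem_baR hμ hν,
    fun _ hμ r => C.smul_mem_baR hμ r,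
    fun _ hμ _ hg => C.sm_mem_baR hμ hg,
    fun _ hμ _ hν =>
      chargeAbs_add_le C.e_nonneg (C.ordBddOn_of_mem_baR hμ) (C.ordBddOn_of_mem_baR hν),
    fun _ hμ _ hg => C.chargeAbs_sm hμ hg,
    fun _ hμ => chargeAbs_eq_zero_iff C.e_nonneg hμ.1 (C.ordBddOn_of_mem_baR hμ)⟩

end RieszPaper

end
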